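/- arXiv:2504.21098 — 5 statements merged into one kernel-verified Lean document; each statement's English description precedes it below -/
import Mathlib

section
/- Fix an integer l ≥ 1, a real κ > 0, and t = (t_1, …, t_{2l-1}) ∈ ℝ_{≥0}^{2l-1}. For each integer N, set Σ_N := Σ_{i=1}^{2l-1} ⌊t_i √N⌋ and σ := Σ_{i=1}^{2l-1} t_i. Then lim_{N→∞} N^{(2l-1)/2} · (Σ_N + l + κ) / (N + κ)^{Σ_N + l} · ∏_{i=0}^{Σ_N - 1} (N - l - i) = σ · e^{-σ²/2}, where an empty product equals 1. -/
/-!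
With `S = Σ_N` and `M = N + κ`, the expression factors as
`(S + l + κ) / √N · (N / M) ^ l · ∏_{j < S} (1 - (l + κ + j) / M)`.
Since `S / √N → σ`, the prefactor tends to `σ`. Every factor of the product is `1 - x_j` with
`0 ≤ x_j ≤ (l + κ + S) / M → 0`, so `log (1 - x_j) = -x_j (1 + o(1))` uniformly in `j`, and the
logarithm of the product is `-(1 + o(1)) Σ_{j < S} x_j = -(1 + o(1)) S² / (2M) → -σ² / 2`.
-/

open Filter Finset Topology Real

theorem Real.neg_div_one_sub_le_log_one_sub {x ε : ℝ} (hx : 0 ≤ x) (hxε : x ≤ ε) (hε : ε < 1) :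
    -x / (1 - ε) ≤ log (1 - x) := by
  have h1x : 0 < 1 - x := by linarith
  calc -x / (1 - ε) ≤ -x / (1 - x) := by
        rw [neg_div, neg_div, neg_le_neg_iff]
        gcongr
    _ = 1 - (1 - x)⁻¹ := by field_simp; ring
    _ ≤ log (1 - x) := one_sub_inv_le_log_of_pos h1x

theorem tendsto_prod_one_sub_of_tendsto_sum {α ι : Type*} {L : Filter α} {s : α → Finset ι}
    {x : α → ι → ℝ} {ε : α → ℝ} {A : ℝ} (hε : Tendsto ε L (𝓝 0))
    (hx : ∀ᶠ a in L, ∀ i ∈ s a, 0 ≤ x a i ∧ x a i ≤ ε a)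
    (hsum : Tendsto (fun a => ∑ i ∈ s a, x a i) L (𝓝 A)) :
    Tendsto (fun a => ∏ i ∈ s a, (1 - x a i)) L (𝓝 (exp (-A))) := by
  have hbounds : ∀ᶠ a in L, ∀ i ∈ s a, 0 ≤ x a i ∧ x a i ≤ ε a ∧ ε a < 1 := by
    filter_upwards [hx, hε.eventually (gt_mem_nhds one_pos)] with a ha hε1 i hi
    exact ⟨(ha i hi).1, (ha i hi).2, hε1⟩
  have hlog : Tendsto (fun a => ∑ i ∈ s a, log (1 - x a i)) L (𝓝 (-A)) := by
    have hlower : Tendsto (fun a => -(∑ i ∈ s a, x a i) / (1 - ε a)) L (𝓝 (-A)) := by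
      have := hsum.neg.div (tendsto_const_nhds.sub hε) (show (1 : ℝ) - 0 ≠ 0 by norm_num)
      rwa [sub_zero, div_one] at this
    refine tendsto_of_tendsto_of_tendsto_of_le_of_le' hlower hsum.neg ?_ ?_
    · filter_upwards [hbounds] with a ha
      rw [← sum_neg_distrib, sum_div]
      exact sum_le_sum fun i hi =>
        neg_div_one_sub_le_log_one_sub (ha i hi).1 (ha i hi).2.1 (ha i hi).2.2
    · filter_upwards [hbounds] with a ha
      rw [← sum_neg_distrib]
      refine sum_le_sum fun i hi => ?_
      have := log_le_sub_one_of_pos (x := 1 - x a i) (by linarith [(ha i hi).2.1, (ha i hi).2.2])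
      linarith
  refine ((continuous_exp.tendsto _).comp hlog).congr' ?_
  filter_upwards [hbounds] with a ha
  rw [Function.comp_apply, exp_sum]
  exact prod_congr rfl fun i hi => exp_log (by linarith [(ha i hi).2.1, (ha i hi).2.2])

theorem sum_range_add_natCast (c : ℝ) (n : ℕ) :
    ∑ j ∈ range n, (c + j) = n * c + n * (n - 1) / 2 := by
  induction n with
  | zero => simp
  | succ n ih => rw [sum_range_succ, ih]; push_cast; ring

theorem tendsto_prod_one_sub_add_div {α : Type*} {L : Filter α} {M : α → ℝ} {S : α → ℕ}
    {c σ : ℝ} (hc : 0 ≤ c) (hM : Tendsto M L atTop)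
    (hS : Tendsto (fun a => (S a : ℝ) / √(M a)) L (𝓝 σ)) :
    Tendsto (fun a => ∏ j ∈ range (S a), (1 - (c + j) / M a)) L (𝓝 (exp (-σ ^ 2 / 2))) := by
  have hinv : Tendsto (fun a => (√(M a))⁻¹) L (𝓝 0) :=
    (tendsto_sqrt_atTop.comp hM).inv_tendsto_atTop
  have hMpos : ∀ᶠ a in L, 0 < M a := hM.eventually_gt_atTop 0
  have hε : Tendsto (fun a => (c + S a) / M a) L (𝓝 0) := by
    have := ((tendsto_const_nhds (x := c).mul hinv).add hS).mul hinv
    rw [mul_zero] at this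
    refine this.congr' ?_
    filter_upwards [hMpos] with a ha
    have hsq := sq_sqrt ha.le
    have := (sqrt_pos.2 ha).ne'
    field_simp
    rw [hsq, mul_comm]
  have hsum : Tendsto (fun a => ∑ j ∈ range (S a), (c + j) / M a) L (𝓝 (σ ^ 2 / 2)) := by
    have := ((hS.pow 2).div_const 2).add ((hS.mul_const (c - 1 / 2)).mul hinv)
    rw [mul_zero, add_zero] at this
    refine this.congr' ?_
    filter_upwards [hMpos] with a ha
    have hsq := sq_sqrt ha.le
    have := (sqrt_pos.2 ha).ne'
    rw [← sum_div, sum_range_add_natCast]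
    field_simp
    rw [hsq]
    ring
  rw [neg_div]
  refine tendsto_prod_one_sub_of_tendsto_sum hε ?_ hsum
  filter_upwards [hMpos] with a ha j hj
  have hjS : (j : ℝ) ≤ S a := by exact_mod_cast (mem_range.1 hj).le
  exact ⟨by positivity, by gcongr⟩

theorem sqrt_pow_mul_div_pow_mul_prod_eq {x : ℝ} (hx : 0 < x) {l : ℕ} (hl : 1 ≤ l) {κ : ℝ}
    (hxκ : x + κ ≠ 0) (n : ℕ) :
    √x ^ (2 * l - 1) * ((n + l + κ) / (x + κ) ^ (n + l) * ∏ j ∈ range n, (x - l - j)) =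
      (n + l + κ) / √x * (x / (x + κ)) ^ l * ∏ j ∈ range n, (1 - (l + κ + j) / (x + κ)) := by
  have hprod : ∏ j ∈ range n, (1 - (l + κ + j) / (x + κ)) =
      (∏ j ∈ range n, (x - l - j)) / (x + κ) ^ n := by
    rw [← card_range n, ← prod_const (s := range n), card_range, ← prod_div_distrib]
    exact prod_congr rfl fun j _ => by field_simp; ring
  have hsqrt : √x ^ (2 * l - 1) * √x = x ^ l := by
    rw [← pow_succ, Nat.sub_add_cancel (by omega), pow_mul, sq_sqrt hx.le]
  have := (sqrt_pos.2 hx).ne'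
  rw [hprod, div_pow, pow_add, ← hsqrt]
  field_simp

theorem tendsto_sum_nat_floor_mul_div_atTop {ι : Type*} (s : Finset ι) {t : ι → ℝ}
    (ht : ∀ i ∈ s, 0 ≤ t i) :
    Tendsto (fun x => ((∑ i ∈ s, ⌊t i * x⌋₊ : ℕ) : ℝ) / x) atTop (𝓝 (∑ i ∈ s, t i)) := by
  simp only [Nat.cast_sum, sum_div]
  exact tendsto_finsetSum s fun i hi => tendsto_nat_floor_mul_div_atTop (ht i hi)

theorem stmt3 (l : ℕ) (hl : 1 ≤ l) (κ : ℝ) (hκ : 0 < κ)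
    (t : Fin (2 * l - 1) → ℝ) (ht : ∀ i, 0 ≤ t i) :
    Tendsto (fun N : ℕ =>
        Real.sqrt N ^ (2 * l - 1) *
          (((∑ i, ⌊t i * Real.sqrt N⌋₊ : ℕ) + l + κ) /
              ((N : ℝ) + κ) ^ ((∑ i, ⌊t i * Real.sqrt N⌋₊) + l) *
            ∏ j ∈ Finset.range (∑ i, ⌊t i * Real.sqrt N⌋₊), ((N : ℝ) - l - j)))
      atTop
      (nhds ((∑ i, t i) * Real.exp (-(∑ i, t i) ^ 2 / 2))) := by
  set σ := ∑ i, t i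
  set S : ℕ → ℕ := fun N => ∑ i, ⌊t i * √N⌋₊
  have hsqrt : Tendsto (fun N : ℕ => √N) atTop atTop :=
    tendsto_sqrt_atTop.comp tendsto_natCast_atTop_atTop
  have hS : Tendsto (fun N => (S N : ℝ) / √N) atTop (𝓝 σ) :=
    (tendsto_sum_nat_floor_mul_div_atTop univ fun i _ => ht i).comp hsqrt
  have hratio : Tendsto (fun N : ℕ => (N : ℝ) / (N + κ)) atTop (𝓝 1) :=
    tendsto_natCast_div_add_atTop κ
  have hSκ : Tendsto (fun N => (S N : ℝ) / √(N + κ)) atTop (𝓝 σ) := by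
    have := hS.mul ((continuous_sqrt.tendsto 1).comp hratio)
    rw [Function.comp_def, sqrt_one, mul_one] at this
    refine this.congr' ?_
    filter_upwards [eventually_gt_atTop 0] with N hN
    have : √(N : ℝ) ≠ 0 := by positivity
    simp only [sqrt_div' _ (by positivity : (0 : ℝ) ≤ N + κ)]
    field_simp
  have hprefactor :
      Tendsto (fun N => ((S N : ℝ) + l + κ) / √N * (N / (N + κ)) ^ l) atTop (𝓝 σ) := by
    have := (hS.add (tendsto_const_nhds (x := (l : ℝ) + κ).mul hsqrt.inv_tendsto_atTop)).mul
      (hratio.pow l)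
    rw [mul_zero, add_zero, one_pow, mul_one] at this
    refine this.congr fun N => ?_
    simp only [Pi.inv_apply]
    ring
  have hprod := tendsto_prod_one_sub_add_div (c := l + κ) (by positivity)
    (tendsto_atTop_add_const_right _ κ tendsto_natCast_atTop_atTop) hSκ
  refine (hprefactor.mul hprod).congr' ?_
  filter_upwards [eventually_gt_atTop 0] with N hN
  exact (sqrt_pow_mul_div_pow_mul_prod_eq (by positivity) hl (by positivity) (S N)).symm
end

section
/- Fix an integer l ≥ 1 and reals κ > 0 and σ_max > 0. There exist a constant C > 0 and N₀ such that for all integers N ≥ N₀ and all k = (k_1, …, k_{2l-1}) ∈ ℕ^{2l-1} with k_i ≤ σ_max √N for every i, setting Σ := Σ_{i=1}^{2l-1} k_i, one has | N^{(2l-1)/2} · (Σ + l + κ)/(N + κ)^{Σ + l} · ∏_{i=0}^{Σ-1}(N - l - i) − (Σ/√N) · exp(−Σ²/(2N)) | ≤ C/√N. -/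
/-!
With `u_j = (l + j) / N`, the quantity equals `(Σ + l + κ) R / √N` where
`R = ∏_{j<Σ} (1 - u_j) / (1 + κ/N)^(Σ+l)`. Since `∑_{j<Σ} u_j = Σ²/(2N) + Σ(2l-1)/(2N)` and
`-u - 2u² ≤ log (1 - u) ≤ -u` for `u ≤ 1/2`, one gets `-c/√N ≤ log R + Σ²/(2N) ≤ 0` for a constant
`c` as long as `Σ = O(√N)`. Hence `|R - exp (-Σ²/(2N))| ≤ 2c/√N`, and the prefactor
`Σ + l + κ = O(√N)` turns this into an `O(1)` error before the final division by `√N`.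
-/

open Finset Real

lemma neg_sub_two_mul_sq_le_log_one_sub {u : ℝ} (hu : u ≤ 1 / 2) :
    -u - 2 * u ^ 2 ≤ log (1 - u) := by
  have hpos : 0 < 1 - u := by linarith
  refine le_trans ?_ (one_sub_inv_le_log_of_pos hpos)
  rw [show 1 - (1 - u)⁻¹ = -u / (1 - u) by field_simp; ring, le_div_iff₀ hpos]
  nlinarith [sq_nonneg u]

lemma sum_range_add_natCast_div (a n : ℝ) (S : ℕ) :
    ∑ j ∈ range S, (a + j) / n = S ^ 2 / (2 * n) + S * (2 * a - 1) / (2 * n) := by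
  induction S with
  | zero => simp
  | succ m ih => rw [sum_range_succ, ih]; push_cast; ring

noncomputable def fallingRatio (n κ : ℝ) (l S : ℕ) : ℝ :=
  (∏ j ∈ range S, (1 - (l + j) / n)) / (1 + κ / n) ^ (S + l)

section fallingRatio

variable {n κ : ℝ} {l S : ℕ}

lemma sqrt_pow_mul_div_pow_mul_prod (hn : 0 < n) (hl : 1 ≤ l) :
    √n ^ (2 * l - 1) * ((S + l + κ) / (n + κ) ^ (S + l) * ∏ j ∈ range S, (n - l - j)) =
      (S + l + κ) * fallingRatio n κ l S / √n := by
  have hs : 0 < √n := sqrt_pos.mpr hn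
  have hpow : √n ^ (2 * l - 1) * √n = n ^ l := by
    rw [← pow_succ, Nat.sub_add_cancel (by omega), pow_mul, sq_sqrt hn.le]
  have hprod : ∏ j ∈ range S, (n - l - j) = n ^ S * ∏ j ∈ range S, (1 - (l + j) / n) := by
    rw [← card_range S, ← prod_const, card_range, ← prod_mul_distrib]
    refine prod_congr rfl fun j _ => ?_
    field_simp; ring
  have hden : (n + κ) ^ (S + l) = n ^ (S + l) * (1 + κ / n) ^ (S + l) := by
    rw [← mul_pow]; congr 1; field_simp
  rw [eq_div_iff hs.ne', mul_right_comm, hpow, fallingRatio, hprod, hden]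
  field_simp
  ring

lemma one_sub_add_div_pos (hn : 0 < n) (hSl : S + l ≤ n) {j : ℕ} (hj : j ∈ range S) :
    0 < 1 - (l + j) / n := by
  have : (j : ℝ) + 1 ≤ S := by exact_mod_cast mem_range.mp hj
  rw [sub_pos, div_lt_one hn]; linarith

lemma fallingRatio_pos (hn : 0 < n) (hκ : 0 ≤ κ) (hSl : S + l ≤ n) :
    0 < fallingRatio n κ l S :=
  div_pos (prod_pos fun _ hj => one_sub_add_div_pos hn hSl hj) (by positivity)

lemma log_fallingRatio (hn : 0 < n) (hκ : 0 ≤ κ) (hSl : S + l ≤ n) :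
    log (fallingRatio n κ l S) =
      ∑ j ∈ range S, log (1 - (l + j) / n) - (S + l) * log (1 + κ / n) := by
  rw [fallingRatio, log_div, log_prod, log_pow]
  · push_cast; ring
  · exact fun j hj => (one_sub_add_div_pos hn hSl hj).ne'
  · exact (prod_pos fun j hj => one_sub_add_div_pos hn hSl hj).ne'
  · positivity

lemma log_fallingRatio_add_le (hn : 0 < n) (hκ : 0 ≤ κ) (hl : 1 ≤ l) (hSl : S + l ≤ n) :
    log (fallingRatio n κ l S) + S ^ 2 / (2 * n) ≤ 0 := by
  have hlog : ∑ j ∈ range S, log (1 - (l + j) / n) ≤ -∑ j ∈ range S, (l + j) / n := by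
    rw [← sum_neg_distrib]
    refine sum_le_sum fun j hj => ?_
    linarith [log_le_sub_one_of_pos (one_sub_add_div_pos hn hSl hj)]
  have hκlog : 0 ≤ log (1 + κ / n) := log_nonneg (by linarith [div_nonneg hκ hn.le])
  have hsum := sum_range_add_natCast_div l n S
  have hl' : (1 : ℝ) ≤ l := by exact_mod_cast hl
  have : 0 ≤ (S : ℝ) * (2 * l - 1) / (2 * n) := by
    exact div_nonneg (mul_nonneg (Nat.cast_nonneg S) (by linarith)) (by linarith)
  rw [log_fallingRatio hn hκ hSl]
  nlinarith [mul_nonneg (by positivity : (0 : ℝ) ≤ S + l) hκlog]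

lemma le_log_fallingRatio_add (hn : 0 < n) (hκ : 0 ≤ κ) (hSl : 2 * (S + l) ≤ n) :
    -(S * (2 * l - 1) / (2 * n) + 2 * S * ((S + l) / n) ^ 2 + (S + l) * κ / n) ≤
      log (fallingRatio n κ l S) + S ^ 2 / (2 * n) := by
  have hSl' : (S : ℝ) + l ≤ n := by linarith [(by positivity : (0 : ℝ) ≤ S + l)]
  have hu : ∀ j ∈ range S, 0 ≤ ((l : ℝ) + j) / n ∧ ((l : ℝ) + j) / n ≤ (S + l) / n := by
    intro j hj
    have : (j : ℝ) + 1 ≤ S := by exact_mod_cast mem_range.mp hj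
    exact ⟨by positivity, div_le_div_of_nonneg_right (by linarith) hn.le⟩
  have hlog : -∑ j ∈ range S, ((l : ℝ) + j) / n - 2 * ∑ j ∈ range S, (((l : ℝ) + j) / n) ^ 2 ≤
      ∑ j ∈ range S, log (1 - (l + j) / n) := by
    rw [mul_sum, ← sum_neg_distrib, ← sum_sub_distrib]
    have hhalf : ((S : ℝ) + l) / n ≤ 1 / 2 := by rw [div_le_iff₀ hn]; linarith
    exact sum_le_sum fun j hj => neg_sub_two_mul_sq_le_log_one_sub ((hu j hj).2.trans hhalf)
  have hsq : ∑ j ∈ range S, (((l : ℝ) + j) / n) ^ 2 ≤ S * ((S + l) / n) ^ 2 := by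
    simpa using sum_le_card_nsmul (range S) _ _ fun j hj => pow_le_pow_left₀ (hu j hj).1 (hu j hj).2 2
  have hκlog : (S + l) * log (1 + κ / n) ≤ (S + l) * κ / n := by
    have h := log_le_sub_one_of_pos (x := 1 + κ / n) (by positivity)
    rw [mul_div_assoc]
    exact mul_le_mul_of_nonneg_left (by linarith) (by positivity)
  have hsum := sum_range_add_natCast_div l n S
  rw [log_fallingRatio hn hκ hSl']
  linarith

end fallingRatio

lemma abs_exp_sub_exp_le {a b : ℝ} (hb : b ≤ 0) (hab : |a - b| ≤ 1) :
    |exp a - exp b| ≤ 2 * |a - b| := by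
  have hsplit : exp a - exp b = exp b * (exp (a - b) - 1) := by
    rw [mul_sub, ← exp_add, add_sub_cancel, mul_one]
  rw [hsplit, abs_mul, abs_of_pos (exp_pos b)]
  calc exp b * |exp (a - b) - 1| ≤ 1 * (2 * |a - b|) :=
        mul_le_mul (exp_le_one_iff.mpr hb) (abs_exp_sub_one_le hab) (abs_nonneg _) zero_le_one
    _ = 2 * |a - b| := one_mul _

lemma abs_add_mul_sub_mul_exp_neg_le {S a R x ε : ℝ} (hS : 0 ≤ S) (ha : 0 ≤ a) (hR : 0 < R)
    (hx : 0 ≤ x) (hle : log R + x ≤ 0) (hε : |log R + x| ≤ ε) (hε1 : ε ≤ 1) :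
    |(S + a) * R - S * exp (-x)| ≤ 2 * S * ε + a := by
  have hR1 : R ≤ 1 := by
    rw [← exp_log hR]; exact exp_le_one_iff.mpr (by linarith)
  have hdiff : |R - exp (-x)| ≤ 2 * ε := by
    have h := abs_exp_sub_exp_le (a := log R) (b := -x) (by linarith)
      (by rw [sub_neg_eq_add]; linarith)
    rw [exp_log hR, sub_neg_eq_add] at h
    linarith
  calc |(S + a) * R - S * exp (-x)| = |S * (R - exp (-x)) + a * R| := by ring_nf
    _ ≤ S * (2 * ε) + a * 1 := by
        refine (abs_add_le _ _).trans (add_le_add ?_ ?_)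
        · rw [abs_mul, abs_of_nonneg hS]; exact mul_le_mul_of_nonneg_left hdiff hS
        · rw [abs_of_nonneg (by positivity)]; exact mul_le_mul_of_nonneg_left hR1 ha
    _ = 2 * S * ε + a := by ring

section sqrtScale

variable {n κ M c : ℝ} {l S : ℕ}

lemma two_mul_add_le_of_le_sqrt (hM : 0 ≤ M) (hS : S ≤ M * √n) (hls : l ≤ √n)
    (hMs : 2 * (M + 1) ≤ √n) : 2 * ((S : ℝ) + l) ≤ n := by
  have hn : 0 < n := sqrt_pos.mp (by linarith)
  nlinarith [mul_self_sqrt hn.le]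

lemma abs_log_fallingRatio_add_le (hl : 1 ≤ l) (hκ : 0 ≤ κ) (hM : 0 ≤ M) (hS : S ≤ M * √n)
    (hls : l ≤ √n) (hMs : 2 * (M + 1) ≤ √n) :
    |log (fallingRatio n κ l S) + S ^ 2 / (2 * n)| ≤
      (M * (2 * l - 1) / 2 + 2 * M * (M + 1) ^ 2 + (M + 1) * κ) / √n := by
  have hl' : (1 : ℝ) ≤ l := by exact_mod_cast hl
  have hs : 0 < √n := by linarith
  have hn : 0 < n := sqrt_pos.mp hs
  have hns : n = √n * √n := (mul_self_sqrt hn.le).symm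
  have hSls : (S : ℝ) + l ≤ (M + 1) * √n := by linarith
  have hSln := two_mul_add_le_of_le_sqrt hM hS hls hMs
  set a : ℝ := S / √n with ha
  set b : ℝ := (S + l) / √n with hb
  have haM : a ≤ M := by rw [ha, div_le_iff₀ hs]; exact hS
  have hbM : b ≤ M + 1 := by rw [hb, div_le_iff₀ hs]; exact hSls
  have hrw : S * (2 * l - 1) / (2 * n) + 2 * S * ((S + l) / n) ^ 2 + (S + l) * κ / n =
      (a * (2 * l - 1) / 2 + 2 * a * b ^ 2 + b * κ) / √n := by
    rw [ha, hb]
    generalize √n = s at hs hns ⊢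
    subst hns
    field_simp
  have hbound : a * (2 * l - 1) / 2 + 2 * a * b ^ 2 + b * κ ≤
      M * (2 * l - 1) / 2 + 2 * M * (M + 1) ^ 2 + (M + 1) * κ := by
    have : 0 ≤ a := by positivity
    have : 0 ≤ b := by positivity
    gcongr
    linarith
  rw [abs_le]
  constructor
  · refine le_trans ?_ (le_log_fallingRatio_add hn hκ hSln)
    rw [hrw, neg_le_neg_iff]
    exact div_le_div_of_nonneg_right hbound hs.le
  · refine (log_fallingRatio_add_le hn hκ hl (by linarith)).trans ?_
    have : 0 ≤ a := by positivity
    have : 0 ≤ b := by positivity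
    exact div_nonneg (by nlinarith) hs.le

lemma abs_sqrt_pow_mul_sub_le (hl : 1 ≤ l) (hκ : 0 ≤ κ) (hM : 0 ≤ M)
    (hc : M * (2 * l - 1) / 2 + 2 * M * (M + 1) ^ 2 + (M + 1) * κ ≤ c) (hS : S ≤ M * √n)
    (hls : l ≤ √n) (hMs : 2 * (M + 1) ≤ √n) (hcs : c ≤ √n) :
    |√n ^ (2 * l - 1) * ((S + l + κ) / (n + κ) ^ (S + l) * ∏ j ∈ range S, (n - l - j)) -
        (S / √n) * exp (-(S : ℝ) ^ 2 / (2 * n))| ≤ (2 * M * c + l + κ) / √n := by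
  have hs : 0 < √n := by linarith [(by exact_mod_cast hl : (1 : ℝ) ≤ l)]
  have hn : 0 < n := sqrt_pos.mp hs
  have hSln := two_mul_add_le_of_le_sqrt hM hS hls hMs
  have hδ := (abs_log_fallingRatio_add_le hl hκ hM hS hls hMs).trans
    (div_le_div_of_nonneg_right hc hs.le)
  have hcore := abs_add_mul_sub_mul_exp_neg_le (S := S) (a := l + κ) (x := S ^ 2 / (2 * n))
    (by positivity) (by positivity) (fallingRatio_pos hn hκ (by linarith)) (by positivity)
    (log_fallingRatio_add_le hn hκ hl (by linarith)) hδ ((div_le_one hs).mpr hcs)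
  rw [sqrt_pow_mul_div_pow_mul_prod hn hl, neg_div, div_mul_eq_mul_div, div_sub_div_same,
    abs_div, abs_of_pos hs]
  rw [← add_assoc] at hcore
  refine div_le_div_of_nonneg_right (hcore.trans ?_) hs.le
  have hc0 : 0 ≤ c := by
    have : 0 ≤ M * (2 * l - 1) := mul_nonneg hM (by linarith [(by exact_mod_cast hl : (1 : ℝ) ≤ l)])
    have : 0 ≤ 2 * M * (M + 1) ^ 2 + (M + 1) * κ := by positivity
    linarith
  have : 2 * S * (c / √n) ≤ 2 * M * c := by
    rw [mul_div_assoc', div_le_iff₀ hs]; nlinarith [mul_le_mul_of_nonneg_right hS hc0]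
  linarith

end sqrtScale

theorem stmt4 (l : ℕ) (hl : 1 ≤ l) (κ : ℝ) (hκ : 0 < κ)
    (σmax : ℝ) (hσ : 0 < σmax) :
    ∃ C > (0 : ℝ), ∃ N₀ : ℕ, ∀ N : ℕ, N₀ ≤ N →
      ∀ k : Fin (2 * l - 1) → ℕ, (∀ i, (k i : ℝ) ≤ σmax * Real.sqrt N) →
        |Real.sqrt N ^ (2 * l - 1) *
            (((∑ i, k i : ℕ) + l + κ) / ((N : ℝ) + κ) ^ ((∑ i, k i) + l) *
              ∏ j ∈ Finset.range (∑ i, k i), ((N : ℝ) - l - j)) -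
          ((∑ i, k i : ℕ) / Real.sqrt N) *
            Real.exp (-((∑ i, k i : ℕ) : ℝ) ^ 2 / (2 * N))|
        ≤ C / Real.sqrt N := by
  have hl' : (1 : ℝ) ≤ l := by exact_mod_cast hl
  set M : ℝ := (2 * l - 1) * σmax
  have hM : 0 ≤ M := mul_nonneg (by linarith) hσ.le
  set c : ℝ := M * (2 * l - 1) / 2 + 2 * M * (M + 1) ^ 2 + (M + 1) * κ
  have hc : 0 ≤ c := by
    have : 0 ≤ M * (2 * l - 1) := mul_nonneg hM (by linarith)
    positivity
  refine ⟨2 * M * c + l + κ, by positivity, ⌈(l + 2 * (M + 1) + c) ^ 2⌉₊, fun N hN k hk => ?_⟩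
  have hsqrt : l + 2 * (M + 1) + c ≤ √N :=
    le_sqrt_of_sq_le ((Nat.le_ceil _).trans (by exact_mod_cast hN))
  have hS : ((∑ i, k i : ℕ) : ℝ) ≤ M * √N := by
    have h := sum_le_card_nsmul univ (fun i => (k i : ℝ)) _ fun i _ => hk i
    rw [card_univ, Fintype.card_fin, nsmul_eq_mul, Nat.cast_sub (by omega)] at h
    push_cast at h ⊢
    linarith
  exact abs_sqrt_pow_mul_sub_le hl hκ.le hM le_rfl hS (by linarith) (by linarith) (by linarith)
end

section
/- Fix an integer l ≥ 1 and a real κ > 0. For each integer N, consider the sum S_N := Σ_{k ∈ ℕ^{2l-1}} (Σk + l + κ)/(N + κ)^{Σk + l} · ∏_{i=0}^{Σk - 1}(N - l - i), where Σk := Σ_{i=1}^{2l-1} k_i, an empty product equals 1, and all terms with Σk > N - l vanish because the product contains a zero factor. Then lim_{N→∞} S_N = 1 / c_l, where c_l := ∏_{i=1}^{l-1}(2i - 1). -/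
/-!
Put `n = N - l`, `b = l + κ` and `V s = ∏_{j<s} (n - j) / (n + b)` (`descRatio b n`). By stars and
bars the sum equals `Φ (2l-2) / (n + b)^l`, where `Φ q = ∑_s C(s+q, q) (s + b) V s`
(`biasedMoment b n`). Since `(s + b) V s = (n + b) (V s - V (s+1))`, summation by parts relates `Φ`
to the moments `F q = ∑_s C(s+q, q) V s` (`moment b n`): `Φ 0 = n + b`, `Φ (q+1) = (n + b) F q`
and `Φ q = (q+1) F (q+1) + (b-q-1) F q`. Eliminating `F` gives the recurrence
`(q+1) Φ (q+2) = (n + b) Φ q - (b-q-1) Φ (q+1)`, from which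
`Φ (2j) / (n+b)^(j+1) → 1 / ∏_{i<j} (2i+1)` and `Φ (2j+1) / (n+b)^(j+2) → 0` follow by induction
on `j`. The only analytic input is `F 0 = o(n)`, which follows from `F 0 ≤ t + (n + b) / t` for
every `t ≥ 1`: split the sum at `t` and use `∑_s s V s ≤ Φ 0 = n + b`.
-/

open Filter Finset

theorem Finset.Nat.card_antidiagonalTuple (k s : ℕ) :
    #(Nat.antidiagonalTuple k s) = (k + s - 1).choose s := by
  rw [← piAntidiag_univ_fin_eq_antidiagonalTuple, ← map_sym_eq_piAntidiag, card_map, sym_univ,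
    card_univ, Sym.card_sym_eq_choose, Fintype.card_fin]

theorem tsum_comp_sum_fin_eq_sum_range (m n : ℕ) (f : ℕ → ℝ) (hf : ∀ s, n < s → f s = 0) :
    ∑' k : Fin (m + 1) → ℕ, f (∑ i, k i) = ∑ s ∈ range (n + 1), ((s + m).choose m : ℝ) * f s := by
  have hsupp : ∀ k ∉ (range (n + 1)).biUnion (Nat.antidiagonalTuple (m + 1)),
      f (∑ i, k i) = 0 := by
    intro k hk
    refine hf _ (not_le.1 fun h => hk ?_)
    simp only [mem_biUnion, mem_range, Nat.mem_antidiagonalTuple]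
    exact ⟨_, Nat.lt_succ_of_le h, rfl⟩
  have hdisj : (range (n + 1) : Set ℕ).PairwiseDisjoint (Nat.antidiagonalTuple (m + 1)) :=
    fun s _ t _ hst => disjoint_left.2 fun k hs ht =>
      hst ((Nat.mem_antidiagonalTuple.1 hs).symm.trans (Nat.mem_antidiagonalTuple.1 ht))
  rw [tsum_eq_sum hsupp, sum_biUnion hdisj]
  refine sum_congr rfl fun s _ => ?_
  rw [sum_congr rfl fun k hk => by rw [Nat.mem_antidiagonalTuple.1 hk], sum_const,
    Nat.card_antidiagonalTuple, nsmul_eq_mul, show m + 1 + s - 1 = s + m by omega,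
    Nat.choose_symm_add]

noncomputable def descRatio (b : ℝ) (n s : ℕ) : ℝ :=
  ∏ j ∈ range s, ((n : ℝ) - j) / (n + b)

noncomputable def moment (b : ℝ) (n q : ℕ) : ℝ :=
  ∑ s ∈ range (n + 1), ((s + q).choose q : ℝ) * descRatio b n s

noncomputable def biasedMoment (b : ℝ) (n q : ℕ) : ℝ :=
  ∑ s ∈ range (n + 1), ((s + q).choose q : ℝ) * ((s + b) * descRatio b n s)

section descRatio

variable {b : ℝ} {n s : ℕ}

@[simp]
theorem descRatio_zero : descRatio b n 0 = 1 := prod_range_zero _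

theorem descRatio_succ : descRatio b n (s + 1) = descRatio b n s * ((n - s) / (n + b)) :=
  prod_range_succ _ _

theorem descRatio_eq_zero (hs : n < s) : descRatio b n s = 0 :=
  prod_eq_zero (mem_range.2 hs) (by simp)

theorem descRatio_nonneg (hb : 0 ≤ b) : 0 ≤ descRatio b n s := by
  rcases le_or_gt s n with hs | hs
  · refine prod_nonneg fun j hj => div_nonneg ?_ (by positivity)
    have : (j : ℝ) ≤ n := by exact_mod_cast (mem_range.1 hj).le.trans hs
    linarith
  · exact (descRatio_eq_zero hs).ge

theorem descRatio_le_one (hb : 0 ≤ b) : descRatio b n s ≤ 1 := by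
  rcases le_or_gt s n with hs | hs
  · refine prod_le_one (fun j hj => div_nonneg ?_ (by positivity))
      (fun j _ => div_le_one_of_le₀ (by linarith [j.cast_nonneg (α := ℝ)]) (by positivity))
    have : (j : ℝ) ≤ n := by exact_mod_cast (mem_range.1 hj).le.trans hs
    linarith
  · exact (descRatio_eq_zero hs).trans_le zero_le_one

theorem add_mul_descRatio (h : (n : ℝ) + b ≠ 0) (s : ℕ) :
    (s + b) * descRatio b n s = (n + b) * (descRatio b n s - descRatio b n (s + 1)) := by
  rw [descRatio_succ]
  field_simp
  ring

end descRatio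

section moments

variable {b : ℝ} {n : ℕ}

theorem sum_add_mul_descRatio (h : (n : ℝ) + b ≠ 0) :
    ∑ s ∈ range (n + 1), (s + b) * descRatio b n s = n + b := by
  simp only [add_mul_descRatio h]
  rw [← mul_sum, sum_range_sub', descRatio_zero, descRatio_eq_zero n.lt_succ_self, sub_zero,
    mul_one]

theorem biasedMoment_zero (h : (n : ℝ) + b ≠ 0) : biasedMoment b n 0 = n + b := by
  simpa [biasedMoment] using sum_add_mul_descRatio h

theorem biasedMoment_succ (h : (n : ℝ) + b ≠ 0) (q : ℕ) :
    biasedMoment b n (q + 1) = (n + b) * moment b n q := by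
  -- summation by parts against `s ↦ C(s+q, q+1) * descRatio b n s`, which vanishes at `s = 0`
  -- and at `s = n + 1`
  have hterm : ∀ s, ((s + (q + 1)).choose (q + 1) : ℝ) * ((s + b) * descRatio b n s)
      = (n + b) * (((s + q).choose q : ℝ) * descRatio b n s
        + (((s + q).choose (q + 1) : ℝ) * descRatio b n s
          - ((s + 1 + q).choose (q + 1) : ℝ) * descRatio b n (s + 1))) := by
    intro s
    rw [add_mul_descRatio h, show s + (q + 1) = s + q + 1 by ring,
      show s + 1 + q = s + q + 1 by ring, Nat.choose_succ_succ']
    push_cast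
    ring
  rw [biasedMoment, sum_congr rfl fun s _ => hterm s, ← mul_sum, sum_add_distrib,
    sum_range_sub' (fun s => ((s + q).choose (q + 1) : ℝ) * descRatio b n s),
    descRatio_eq_zero (Nat.lt_succ_self n), zero_add, Nat.choose_eq_zero_of_lt (Nat.lt_succ_self q)]
  simp [moment]

theorem biasedMoment_eq_moment (q : ℕ) :
    biasedMoment b n q = (q + 1) * moment b n (q + 1) + (b - q - 1) * moment b n q := by
  simp only [moment, biasedMoment, mul_sum, ← sum_add_distrib]
  refine sum_congr rfl fun s _ => ?_
  have h := Nat.add_one_mul_choose_eq (s + q) q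
  rw [show s + q + 1 = s + (q + 1) by ring] at h
  have hR : ((s : ℝ) + q + 1) * ((s + q).choose q : ℝ) =
      ((s + (q + 1)).choose (q + 1)) * (q + 1) := by
    exact_mod_cast h
  linear_combination descRatio b n s * hR

theorem biasedMoment_recurrence (h : (n : ℝ) + b ≠ 0) (q : ℕ) :
    (q + 1) * biasedMoment b n (q + 2) =
      (n + b) * biasedMoment b n q - (b - q - 1) * biasedMoment b n (q + 1) := by
  rw [biasedMoment_eq_moment q, biasedMoment_succ h, biasedMoment_succ h]
  ring

theorem moment_zero_le (hb : 0 < b) {t : ℕ} (ht : 0 < t) : moment b n 0 ≤ t + (n + b) / t := by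
  have ht' : (0 : ℝ) < t := by exact_mod_cast ht
  have hterm : ∀ s, descRatio b n s ≤ (if s < t then 1 else 0) + (s + b) * descRatio b n s / t := by
    intro s
    have hV := descRatio_nonneg (n := n) (s := s) hb.le
    split_ifs with hs
    · have := descRatio_le_one (n := n) (s := s) hb.le
      have : 0 ≤ (s + b) * descRatio b n s / t := by positivity
      linarith
    · rw [zero_add, le_div_iff₀ ht']
      have : (t : ℝ) ≤ s := by exact_mod_cast not_lt.1 hs
      nlinarith
  have hcount : ∑ s ∈ range (n + 1), (if s < t then (1 : ℝ) else 0) ≤ t := by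
    rw [sum_boole]
    exact_mod_cast (card_le_card fun s hs => mem_range.2 (mem_filter.1 hs).2).trans
      (card_range t).le
  calc moment b n 0 ≤ ∑ s ∈ range (n + 1),
        ((if s < t then 1 else 0) + (s + b) * descRatio b n s / t) := by
        simpa [moment] using sum_le_sum fun s _ => hterm s
    _ ≤ t + (n + b) / t := by
        rw [sum_add_distrib, ← sum_div, sum_add_mul_descRatio (by positivity)]
        gcongr

end moments

section asymptotics

variable {b : ℝ}

theorem tendsto_moment_zero_div (hb : 0 < b) :
    Tendsto (fun n : ℕ => moment b n 0 / (n + b)) atTop (nhds 0) := by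
  refine tendsto_order.2 ⟨fun a ha => Eventually.of_forall fun n => ha.trans_le ?_, fun ε hε => ?_⟩
  · exact div_nonneg (sum_nonneg fun s _ => mul_nonneg (by positivity) (descRatio_nonneg hb.le))
      (by positivity)
  obtain ⟨t, ht⟩ := exists_nat_gt (2 / ε)
  have ht0 : (0 : ℝ) < t := (by positivity : (0 : ℝ) < 2 / ε).trans ht
  filter_upwards [tendsto_natCast_atTop_atTop.eventually_gt_atTop (2 * t / ε)] with n hn
  have hx : (0 : ℝ) < n + b := by positivity
  have h1 : (t : ℝ) / (n + b) < ε / 2 := by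
    rw [div_lt_iff₀ hx]
    rw [div_lt_iff₀ hε] at hn
    linarith [mul_pos hε hb]
  have h2 : 1 / (t : ℝ) < ε / 2 := by
    rw [div_lt_iff₀ ht0]
    rw [div_lt_iff₀ hε] at ht
    linarith
  calc moment b n 0 / (n + b) ≤ (t + (n + b) / t) / (n + b) :=
        div_le_div_of_nonneg_right (moment_zero_le hb (by exact_mod_cast ht0)) hx.le
    _ = t / (n + b) + 1 / t := by field_simp
    _ < ε := by linarith

theorem biasedMoment_add_two_div_pow (hb : 0 < b) (n q k : ℕ) :
    biasedMoment b n (q + 2) / ((n : ℝ) + b) ^ (k + 1) =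
      (biasedMoment b n q / ((n : ℝ) + b) ^ k
        - (b - q - 1) * (biasedMoment b n (q + 1) / ((n : ℝ) + b) ^ (k + 1))) / (q + 1) := by
  have hx : (n : ℝ) + b ≠ 0 := by positivity
  have hrec := biasedMoment_recurrence hx q
  field_simp
  rw [pow_succ]
  linear_combination ((n : ℝ) + b) ^ k * hrec

theorem tendsto_biasedMoment_div_pow (hb : 0 < b) (j : ℕ) :
    Tendsto (fun n : ℕ => biasedMoment b n (2 * j) / ((n : ℝ) + b) ^ (j + 1)) atTop
        (nhds (1 / ∏ i ∈ range j, (2 * (i : ℝ) + 1))) ∧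
      Tendsto (fun n : ℕ => biasedMoment b n (2 * j + 1) / ((n : ℝ) + b) ^ (j + 2)) atTop
        (nhds 0) := by
  have hx : ∀ n : ℕ, (n : ℝ) + b ≠ 0 := fun n => by positivity
  induction j with
  | zero =>
    refine ⟨tendsto_const_nhds.congr fun n => ?_, (tendsto_moment_zero_div hb).congr fun n => ?_⟩
    · rw [mul_zero, biasedMoment_zero (hx n), zero_add, pow_one, div_self (hx n), prod_range_zero,
        div_one]
    · rw [mul_zero, zero_add, biasedMoment_succ (hx n), pow_two, mul_div_mul_left _ _ (hx n)]
  | succ j ih =>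
    obtain ⟨h_even, h_odd⟩ := ih
    have h_even' :
        Tendsto (fun n : ℕ => biasedMoment b n (2 * (j + 1)) / ((n : ℝ) + b) ^ (j + 1 + 1))
        atTop (nhds (1 / ∏ i ∈ range (j + 1), (2 * (i : ℝ) + 1))) := by
      convert (h_even.sub (h_odd.const_mul (b - (2 * j : ℕ) - 1))).div_const ((2 * j : ℕ) + 1)
        using 1
      · exact funext fun n => biasedMoment_add_two_div_pow hb n (2 * j) (j + 1)
      · rw [prod_range_succ, mul_zero, sub_zero, div_div]
        push_cast
        rfl
    have h_inv : Tendsto (fun n : ℕ => ((n : ℝ) + b)⁻¹) atTop (nhds 0) :=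
      tendsto_inv_atTop_zero.comp (tendsto_atTop_add_const_right _ b tendsto_natCast_atTop_atTop)
    refine ⟨h_even', ?_⟩
    convert (h_odd.sub ((h_even'.mul h_inv).const_mul (b - (2 * j + 1 : ℕ) - 1))).div_const
      ((2 * j + 1 : ℕ) + 1) using 1
    · funext n
      show biasedMoment b n (2 * j + 1 + 2) / ((n : ℝ) + b) ^ (j + 2 + 1) = _
      rw [biasedMoment_add_two_div_pow hb n (2 * j + 1) (j + 2), pow_succ _ (j + 2), ← div_div,
        div_eq_mul_inv (biasedMoment b n (2 * j + 1 + 1) / _) ((n : ℝ) + b)]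
      rfl
    · simp

end asymptotics

theorem tsum_eq_biasedMoment_div_pow (p l n : ℕ) (κ : ℝ) :
    ∑' k : Fin (p + 1) → ℕ,
        (((∑ i, k i : ℕ) : ℝ) + l + κ) / (((n + l : ℕ) : ℝ) + κ) ^ ((∑ i, k i) + l) *
          ∏ j ∈ range (∑ i, k i), (((n + l : ℕ) : ℝ) - l - j) =
      biasedMoment (l + κ) n p / ((n : ℝ) + (l + κ)) ^ l := by
  rw [tsum_comp_sum_fin_eq_sum_range p n
    (fun s => ((s : ℝ) + l + κ) / (((n + l : ℕ) : ℝ) + κ) ^ (s + l) *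
      ∏ j ∈ range s, (((n + l : ℕ) : ℝ) - l - j))
    fun s hs => mul_eq_zero_of_right _ (prod_eq_zero (mem_range.2 hs) (by push_cast; ring)),
    biasedMoment, sum_div]
  refine sum_congr rfl fun s _ => ?_
  simp only [descRatio, prod_div_distrib, prod_const, card_range]
  push_cast
  simp only [add_sub_cancel_right]
  ring

theorem stmt6 (l : ℕ) (hl : 1 ≤ l) (κ : ℝ) (hκ : 0 < κ) :
    Tendsto (fun N : ℕ =>
        ∑' k : Fin (2 * l - 1) → ℕ,
          (((∑ i, k i : ℕ) + l + κ) / ((N : ℝ) + κ) ^ ((∑ i, k i) + l) *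
            ∏ j ∈ Finset.range (∑ i, k i), ((N : ℝ) - l - j)))
      atTop
      (nhds (1 / ∏ i ∈ Finset.range (l - 1), (2 * (i : ℝ) + 1))) := by
  obtain ⟨m, rfl⟩ : ∃ m, l = m + 1 := ⟨l - 1, by omega⟩
  rw [show 2 * (m + 1) - 1 = 2 * m + 1 by omega, Nat.add_sub_cancel,
    ← tendsto_add_atTop_iff_nat (m + 1)]
  simp only [tsum_eq_biasedMoment_div_pow]
  exact (tendsto_biasedMoment_div_pow (by positivity) m).1
end

section
/- Fix integers l ≥ 1 and 1 ≤ r ≤ l and reals c > 0, σ_max > 0, and set d := 2l - r. There exist C > 0 and N₀ such that for all integers N ≥ N₀ and all k ∈ ℕ^d with k_i ≤ σ_max √N for every i, setting Σ := Σ_{i=1}^d k_i, σ := Σ/√N and κ_N := c√N, one has | N^{d/2} · κ_N^{r-1} (l + Σ + κ_N)/(N + κ_N)^{l + Σ} · ∏_{i=0}^{Σ-1}(N - l - i) − c^{r-1}(σ + c) exp(−σ²/2 − cσ) | ≤ C/√N. -/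
open Finset

lemma exp_abs_sub (a b : ℝ) (ha : a ≤ 0) (hb : b ≤ 0) :
    |Real.exp a - Real.exp b| ≤ |a - b| := by
  wlog h : b ≤ a generalizing a b
  · rw [abs_sub_comm, abs_sub_comm a b]; exact this b a hb ha (le_of_not_ge h)
  rw [abs_of_nonneg (sub_nonneg.2 h), abs_of_nonneg (sub_nonneg.2 (Real.exp_le_exp.2 h))]
  have h1 : (b - a) + 1 ≤ Real.exp (b - a) := Real.add_one_le_exp _
  have h2 : Real.exp a ≤ 1 := Real.exp_le_one_iff.2 ha
  have h3 : Real.exp b = Real.exp a * Real.exp (b - a) := by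
    rw [← Real.exp_add]; ring_nf
  nlinarith [Real.exp_pos a, Real.exp_pos (b-a)]

lemma log_one_sub_bound (x : ℝ) (h0 : 0 ≤ x) (h1 : x ≤ 1/2) :
    |Real.log (1 - x) + x| ≤ 2 * x^2 := by
  have hx : (0:ℝ) < 1 - x := by linarith
  have hub : Real.log (1 - x) ≤ -x := by
    have := Real.log_le_sub_one_of_pos hx
    linarith
  have hlb : -x - 2*x^2 ≤ Real.log (1 - x) := by
    have he : Real.exp (-x - 2*x^2) ≤ 1 - x := by
      have h3 : (x + 2*x^2) + 1 ≤ Real.exp (x + 2*x^2) := Real.add_one_le_exp _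
      have h4 : Real.exp (-x - 2*x^2) = 1 / Real.exp (x + 2*x^2) := by
        rw [one_div, ← Real.exp_neg]; ring_nf
      rw [h4, div_le_iff₀ (Real.exp_pos _)]
      nlinarith
    calc -x - 2*x^2 = Real.log (Real.exp (-x - 2*x^2)) := (Real.log_exp _).symm
    _ ≤ Real.log (1 - x) := Real.log_le_log (Real.exp_pos _) he
  rw [abs_le]; constructor <;> nlinarith

set_option maxHeartbeats 4000000 in
theorem stmt8 (l r : ℕ) (hl : 1 ≤ l) (hr1 : 1 ≤ r) (hrl : r ≤ l)
    (c : ℝ) (hc : 0 < c) (σmax : ℝ) (hσ : 0 < σmax) :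
    ∃ C > (0 : ℝ), ∃ N₀ : ℕ, ∀ N : ℕ, N₀ ≤ N →
      ∀ k : Fin (2 * l - r) → ℕ, (∀ i, (k i : ℝ) ≤ σmax * Real.sqrt N) →
        |Real.sqrt N ^ (2 * l - r) *
            ((c * Real.sqrt N) ^ (r - 1) *
              (((l : ℝ) + (∑ i, k i : ℕ) + c * Real.sqrt N) /
                ((N : ℝ) + c * Real.sqrt N) ^ (l + ∑ i, k i)) *
              ∏ j ∈ Finset.range (∑ i, k i), ((N : ℝ) - l - j)) -
          c ^ (r - 1) * (((∑ i, k i : ℕ) : ℝ) / Real.sqrt N + c) *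
            Real.exp (-(((∑ i, k i : ℕ) : ℝ) / Real.sqrt N) ^ 2 / 2 -
              c * (((∑ i, k i : ℕ) : ℝ) / Real.sqrt N))|
        ≤ C / Real.sqrt N := by
  -- constants
  obtain ⟨Smax, hSmaxdef⟩ : ∃ x : ℝ, x = 2 * l * σmax := ⟨_, rfl⟩
  have hSmax : 0 < Smax := by
    have h1 : (1:ℝ) ≤ (l:ℝ) := by exact_mod_cast hl
    rw [hSmaxdef]; nlinarith
  obtain ⟨M, hMdef⟩ : ∃ x : ℝ, x = (l:ℝ) + Smax + c := ⟨_, rfl⟩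
  have hM : 0 < M := by
    have : (1:ℝ) ≤ (l:ℝ) := by exact_mod_cast hl
    nlinarith
  obtain ⟨K, hKdef⟩ : ∃ x : ℝ, x = l*c + 2*Smax*M^2 + Smax*((l:ℝ)+M*c) + Smax/2 := ⟨_, rfl⟩
  have hK : 0 < K := by
    have h1 : (1:ℝ) ≤ (l:ℝ) := by exact_mod_cast hl
    have h2 : (0:ℝ) < Smax * ((l:ℝ) + M*c) := by
      apply mul_pos hSmax; nlinarith
    have h3 : (0:ℝ) ≤ 2*Smax*M^2 := by positivity
    have h4 : (0:ℝ) < (l:ℝ)*c := by positivity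
    rw [hKdef]; linarith
  refine ⟨c^(r-1) * ((Smax + c) * K + l) + 1, by positivity, ⌈(2*M+1)^2⌉₊, ?_⟩
  intro N hN k hk
  set q : ℝ := Real.sqrt N with hqdef
  set S : ℕ := ∑ i, k i with hSdef
  clear_value S
  -- basic facts about q
  have hqN : (2*M+1)^2 ≤ (N:ℝ) := by
    calc (2*M+1)^2 ≤ (⌈(2*M+1)^2⌉₊ : ℝ) := Nat.le_ceil _
    _ ≤ (N:ℝ) := by exact_mod_cast hN
  have hq2M : 2*M + 1 ≤ q := by
    rw [hqdef, show (2*M+1 : ℝ) = Real.sqrt ((2*M+1)^2) from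
      (Real.sqrt_sq (by positivity)).symm]
    exact Real.sqrt_le_sqrt hqN
  have hq1 : (1:ℝ) ≤ q := by nlinarith
  have hq : (0:ℝ) < q := by linarith
  have hNq : (N:ℝ) = q * q := by
    rw [hqdef]; exact (Real.mul_self_sqrt (Nat.cast_nonneg N)).symm
  clear_value q
  have hNpos : (0:ℝ) < (N:ℝ) := by nlinarith
  have hNκ : (0:ℝ) < (N:ℝ) + c*q := by positivity
  -- bound on S
  have hSle : (S:ℝ) ≤ Smax * q := by
    have h1 : (S:ℝ) = ∑ i, ((k i : ℕ) : ℝ) := by rw [hSdef]; push_cast; rfl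
    rw [h1]
    calc ∑ i, ((k i : ℕ) : ℝ) ≤ ∑ _i : Fin (2*l-r), σmax * q :=
          Finset.sum_le_sum fun i _ => hk i
    _ = (2*l-r : ℕ) * (σmax * q) := by rw [Finset.sum_const, Finset.card_univ,
          Fintype.card_fin, nsmul_eq_mul]
    _ ≤ (2*l : ℝ) * (σmax * q) := by
          have hcard : ((2*l-r : ℕ):ℝ) ≤ 2*(l:ℝ) := by
            calc ((2*l-r:ℕ):ℝ) ≤ ((2*l:ℕ):ℝ) := by exact_mod_cast Nat.sub_le (2*l) r
            _ = 2*(l:ℝ) := by push_cast; ring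
          nlinarith [mul_pos hσ hq]
    _ = Smax * q := by rw [hSmaxdef]; ring
  have hlSκ : (l:ℝ) + (S:ℝ) + c*q ≤ M * q := by
    have hlq : (l:ℝ) ≤ (l:ℝ) * q := by nlinarith [Nat.cast_nonneg (α := ℝ) l]
    nlinarith
  -- x and y sequences
  obtain ⟨xv, hxdef⟩ : ∃ f : ℕ → ℝ, ∀ j : ℕ, f j = ((l:ℝ) + j + c*q) / ((N:ℝ) + c*q) :=
    ⟨_, fun _ => rfl⟩
  obtain ⟨yv, hydef⟩ : ∃ f : ℕ → ℝ, ∀ j : ℕ, f j = ((j:ℝ) + c*q) / (N:ℝ) :=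
    ⟨_, fun _ => rfl⟩
  have hxmem : ∀ j ∈ Finset.range S, 0 ≤ xv j ∧ xv j ≤ M / q := by
    intro j hj
    have hjS : (j:ℝ) + 1 ≤ (S:ℝ) := by
      exact_mod_cast Nat.succ_le_of_lt (Finset.mem_range.mp hj)
    rw [hxdef j]
    constructor
    · apply div_nonneg _ hNκ.le
      positivity
    · rw [div_le_div_iff₀ hNκ hq]
      have h1 : (l:ℝ) + j + c*q ≤ M * q := by nlinarith
      have h2 : ((l:ℝ)+j+c*q)*q ≤ M*(q*q) := by nlinarith [mul_le_mul_of_nonneg_right h1 hq.le]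
      have h3 : (0:ℝ) < M*(c*q) := by positivity
      nlinarith [hNq]
  have hMq : M / q ≤ 1/2 := by
    rw [div_le_iff₀ hq]; nlinarith
  -- product identity
  have hprod : ∏ j ∈ Finset.range S, ((N:ℝ) - l - j)
      = ((N:ℝ) + c*q)^S * ∏ j ∈ Finset.range S, (1 - xv j) := by
    have hfac : ∀ j ∈ Finset.range S, ((N:ℝ) - l - j) = ((N:ℝ)+c*q) * (1 - xv j) := by
      intro j _
      rw [hxdef j]
      field_simp
      ring
    rw [Finset.prod_congr rfl hfac, Finset.prod_mul_distrib, Finset.prod_const,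
      Finset.card_range]
  -- power identity
  have hNl : q^(2*l-r) * q^(r-1) * q = ((N:ℝ))^l := by
    have h1 : q^(2*l-r) * q^(r-1) * q = q^((2*l-r)+(r-1)+1) := by ring
    rw [h1, show (2*l-r)+(r-1)+1 = 2*l by omega, hNq, ← pow_two, ← pow_mul]

  -- key algebraic identity
  have key : q ^ (2*l-r) * ((c*q)^(r-1) * (((l:ℝ) + (S:ℝ) + c*q) / ((N:ℝ)+c*q)^(l+S)) *
      ∏ j ∈ Finset.range S, ((N:ℝ) - l - j))
      = c^(r-1) * (((l:ℝ) + (S:ℝ) + c*q)/q) * (((N:ℝ)/((N:ℝ)+c*q))^l *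
        ∏ j ∈ Finset.range S, (1 - xv j)) := by
    rw [hprod, pow_add, mul_pow, div_pow, ← hNl]
    have hne1 : ((N:ℝ)+c*q) ≠ 0 := hNκ.ne'
    field_simp
  -- exponential representation
  have hxpos : ∀ j ∈ Finset.range S, (0:ℝ) < 1 - xv j := by
    intro j hj
    have h := (hxmem j hj).2
    linarith
  obtain ⟨T, hTdef⟩ : ∃ x : ℝ, x = (l:ℝ) * Real.log ((N:ℝ)/((N:ℝ)+c*q))
      + ∑ j ∈ Finset.range S, Real.log (1 - xv j) := ⟨_, rfl⟩
  have hvpos : (0:ℝ) < (N:ℝ)/((N:ℝ)+c*q) := by positivity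
  have hvle : (N:ℝ)/((N:ℝ)+c*q) ≤ 1 := by
    rw [div_le_one hNκ]; nlinarith [mul_pos hc hq]
  have hPexp : ((N:ℝ)/((N:ℝ)+c*q))^l * ∏ j ∈ Finset.range S, (1 - xv j) = Real.exp T := by
    rw [hTdef, Real.exp_add, Real.exp_sum]
    congr 1
    · rw [Real.exp_nat_mul, Real.exp_log hvpos]
    · exact Finset.prod_congr rfl fun j hj => (Real.exp_log (hxpos j hj)).symm
  have hlogv : Real.log ((N:ℝ)/((N:ℝ)+c*q)) ≤ 0 := Real.log_nonpos hvpos.le hvle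
  have hT0 : T ≤ 0 := by
    rw [hTdef]
    have h2 : ∑ j ∈ Finset.range S, Real.log (1 - xv j) ≤ 0 :=
      Finset.sum_nonpos fun j hj => Real.log_nonpos (hxpos j hj).le
        (by linarith [(hxmem j hj).1])
    nlinarith [mul_nonneg (Nat.cast_nonneg (α := ℝ) l) (neg_nonneg.2 hlogv)]
  -- Gauss sum
  have hgauss : (∑ j ∈ Finset.range S, (j:ℝ)) * 2 = (S:ℝ)^2 - S := by
    rcases Nat.eq_zero_or_pos S with h0 | h0
    · subst h0; simp
    · have h := Finset.sum_range_id_mul_two S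
      have h2 := congrArg (Nat.cast : ℕ → ℝ) h
      push_cast [Nat.cast_sub h0] at h2
      linear_combination h2
  have hsumy : ∑ j ∈ Finset.range S, yv j = (((S:ℝ)^2 - S)/2 + (S:ℝ)*(c*q))/(N:ℝ) := by
    simp only [hydef]
    rw [← Finset.sum_div]
    congr 1
    rw [Finset.sum_add_distrib, Finset.sum_const, Finset.card_range, nsmul_eq_mul]
    linarith [hgauss]
  -- difference decomposition
  have hTdiff : T - (-((S:ℝ)/q)^2/2 - c*((S:ℝ)/q))
      = (l:ℝ) * Real.log ((N:ℝ)/((N:ℝ)+c*q))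
        + (∑ j ∈ Finset.range S, (Real.log (1 - xv j) + xv j))
        - (∑ j ∈ Finset.range S, (xv j - yv j))
        + (S:ℝ)/(2*(q*q)) := by
    rw [hTdef, Finset.sum_add_distrib, Finset.sum_sub_distrib, hsumy, hNq]
    field_simp
    ring
  -- bound B1
  have hB1 : |(l:ℝ) * Real.log ((N:ℝ)/((N:ℝ)+c*q))| ≤ (l:ℝ)*c/q := by
    have hlog2 : -(c/q) ≤ Real.log ((N:ℝ)/((N:ℝ)+c*q)) := by
      have h1 : Real.log (((N:ℝ)+c*q)/(N:ℝ)) ≤ ((N:ℝ)+c*q)/(N:ℝ) - 1 :=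
        Real.log_le_sub_one_of_pos (by positivity)
      have h2 : ((N:ℝ)+c*q)/(N:ℝ) - 1 = c/q := by
        rw [hNq]; field_simp; ring
      have h3 : Real.log ((N:ℝ)/((N:ℝ)+c*q)) = - Real.log (((N:ℝ)+c*q)/(N:ℝ)) := by
        rw [← Real.log_inv]; congr 1; rw [inv_div]
      rw [h3]; linarith
    rw [abs_mul, Nat.abs_cast]
    have habs : |Real.log ((N:ℝ)/((N:ℝ)+c*q))| ≤ c/q := by
      rw [abs_le]; constructor
      · linarith
      · have : (0:ℝ) ≤ c/q := by positivity
        linarith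
    calc (l:ℝ) * |Real.log ((N:ℝ)/((N:ℝ)+c*q))| ≤ (l:ℝ) * (c/q) :=
          mul_le_mul_of_nonneg_left habs (Nat.cast_nonneg l)
    _ = (l:ℝ)*c/q := by ring
  -- bound B2
  have hB2 : |∑ j ∈ Finset.range S, (Real.log (1 - xv j) + xv j)| ≤ 2*Smax*M^2/q := by
    calc |∑ j ∈ Finset.range S, (Real.log (1 - xv j) + xv j)|
        ≤ ∑ j ∈ Finset.range S, |Real.log (1 - xv j) + xv j| :=
          Finset.abs_sum_le_sum_abs _ _
    _ ≤ ∑ _j ∈ Finset.range S, 2*(M/q)^2 := by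
          apply Finset.sum_le_sum
          intro j hj
          obtain ⟨hx0, hx1⟩ := hxmem j hj
          calc |Real.log (1 - xv j) + xv j| ≤ 2 * (xv j)^2 :=
                log_one_sub_bound _ hx0 (hx1.trans hMq)
          _ ≤ 2*(M/q)^2 := by nlinarith
    _ = (S:ℝ) * (2*(M/q)^2) := by
          rw [Finset.sum_const, Finset.card_range, nsmul_eq_mul]
    _ ≤ 2*Smax*M^2/q := by
          have h1 : (S:ℝ) * (2*(M/q)^2) ≤ (Smax*q) * (2*(M/q)^2) :=
            mul_le_mul_of_nonneg_right hSle (by positivity)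
          have h2 : (Smax*q)*(2*(M/q)^2) = 2*Smax*M^2/q := by
            field_simp
          linarith
  -- bound B3
  have hB3 : |∑ j ∈ Finset.range S, (xv j - yv j)| ≤ Smax*((l:ℝ)+M*c)/q := by
    have hterm : ∀ j ∈ Finset.range S, |xv j - yv j| ≤ ((l:ℝ)+M*c)/(q*q) := by
      intro j hj
      have hjS : (j:ℝ) + 1 ≤ (S:ℝ) := by
        exact_mod_cast Nat.succ_le_of_lt (Finset.mem_range.mp hj)
      have hj1 : (j:ℝ) + c*q ≤ M*q := by
        rw [hMdef]
        have h4 : (0:ℝ) ≤ (l:ℝ)*q := mul_nonneg (Nat.cast_nonneg l) hq.le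
        linarith
      have hid : xv j - yv j
          = ((l:ℝ)*(N:ℝ) - ((j:ℝ)+c*q)*(c*q))/(((N:ℝ)+c*q)*(N:ℝ)) := by
        rw [hxdef j, hydef j]
        field_simp
        ring
      rw [hid, abs_div, abs_of_pos (show (0:ℝ) < ((N:ℝ)+c*q)*(N:ℝ) by positivity)]
      have hnum : |(l:ℝ)*(N:ℝ) - ((j:ℝ)+c*q)*(c*q)| ≤ ((l:ℝ)+M*c)*(q*q) := by
        have hjb : (0:ℝ) ≤ (j:ℝ) + c*q := by positivity
        have hmm : ((j:ℝ)+c*q)*(c*q) ≤ (M*q)*(c*q) :=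
          mul_le_mul_of_nonneg_right hj1 (by positivity)
        have hl0 : (0:ℝ) ≤ (l:ℝ)*(N:ℝ) := by positivity
        rw [abs_le]; constructor
        · nlinarith [mul_nonneg hjb (mul_pos hc hq).le]
        · nlinarith [mul_nonneg hjb (mul_pos hc hq).le]
      have hden : (q*q)*(q*q) ≤ ((N:ℝ)+c*q)*(N:ℝ) := by
        rw [hNq]; nlinarith [mul_pos hc hq]
      calc |(l:ℝ)*(N:ℝ) - ((j:ℝ)+c*q)*(c*q)|/(((N:ℝ)+c*q)*(N:ℝ))
          ≤ (((l:ℝ)+M*c)*(q*q))/((q*q)*(q*q)) :=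
            div_le_div₀ (by positivity) hnum (by positivity) hden
      _ = ((l:ℝ)+M*c)/(q*q) := by field_simp
    calc |∑ j ∈ Finset.range S, (xv j - yv j)|
        ≤ ∑ j ∈ Finset.range S, |xv j - yv j| := Finset.abs_sum_le_sum_abs _ _
    _ ≤ ∑ _j ∈ Finset.range S, ((l:ℝ)+M*c)/(q*q) := Finset.sum_le_sum hterm
    _ = (S:ℝ) * (((l:ℝ)+M*c)/(q*q)) := by
          rw [Finset.sum_const, Finset.card_range, nsmul_eq_mul]
    _ ≤ Smax*((l:ℝ)+M*c)/q := by
          have hc0 : (0:ℝ) ≤ ((l:ℝ)+M*c)/(q*q) := by positivity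
          have h1 := mul_le_mul_of_nonneg_right hSle hc0
          have h2 : (Smax*q)*(((l:ℝ)+M*c)/(q*q)) = Smax*((l:ℝ)+M*c)/q := by
            field_simp
          linarith
  -- bound B4
  have hB4 : (S:ℝ)/(2*(q*q)) ≤ Smax/(2*q) := by
    have h1 : (S:ℝ)/(2*(q*q)) ≤ (Smax*q)/(2*(q*q)) := by
      gcongr
    have h2 : (Smax*q)/(2*(q*q)) = Smax/(2*q) := by field_simp
    linarith
  have hB40 : (0:ℝ) ≤ (S:ℝ)/(2*(q*q)) := by positivity
  -- total bound on |T - T₀|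
  have hTT : |T - (-((S:ℝ)/q)^2/2 - c*((S:ℝ)/q))| ≤ K/q := by
    rw [hTdiff]
    set A1 := (l:ℝ) * Real.log ((N:ℝ)/((N:ℝ)+c*q)) with hA1
    set A2 := ∑ j ∈ Finset.range S, (Real.log (1 - xv j) + xv j) with hA2
    set A3 := ∑ j ∈ Finset.range S, (xv j - yv j) with hA3
    set A4 := (S:ℝ)/(2*(q*q)) with hA4
    have e1 : |A1 + A2 - A3 + A4| ≤ |A1| + |A2| + |A3| + |A4| := by
      calc |A1 + A2 - A3 + A4| ≤ |A1 + A2 - A3| + |A4| := abs_add_le _ _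
      _ ≤ (|A1 + A2| + |A3|) + |A4| := by
            have : |A1 + A2 - A3| ≤ |A1 + A2| + |A3| := by
              rw [sub_eq_add_neg]
              calc |A1 + A2 + -A3| ≤ |A1 + A2| + |-A3| := abs_add_le _ _
              _ = |A1 + A2| + |A3| := by rw [abs_neg]
            linarith
      _ ≤ (|A1| + |A2| + |A3|) + |A4| := by
            have := abs_add_le A1 A2
            linarith
    have e4 : |A4| = A4 := abs_of_nonneg hB40
    have hKq : K/q = (l:ℝ)*c/q + 2*Smax*M^2/q + Smax*((l:ℝ)+M*c)/q + Smax/(2*q) := by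
      rw [hKdef]; field_simp
    rw [hKq]
    rw [e4] at e1
    linarith
  have hT0le : -((S:ℝ)/q)^2/2 - c*((S:ℝ)/q) ≤ 0 := by
    have h1 : (0:ℝ) ≤ ((S:ℝ)/q)^2 := sq_nonneg _
    have h2 : (0:ℝ) ≤ c*((S:ℝ)/q) := by positivity
    linarith
  have hPE : |Real.exp T - Real.exp (-((S:ℝ)/q)^2/2 - c*((S:ℝ)/q))| ≤ K/q :=
    (exp_abs_sub _ _ hT0 hT0le).trans hTT
  -- final assembly
  rw [key, hPexp]
  have hsplit : c^(r-1) * (((l:ℝ) + (S:ℝ) + c*q)/q) * Real.exp T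
      - c^(r-1) * ((S:ℝ)/q + c) * Real.exp (-((S:ℝ)/q)^2/2 - c*((S:ℝ)/q))
      = c^(r-1) * (((S:ℝ)/q + c) * (Real.exp T - Real.exp (-((S:ℝ)/q)^2/2 - c*((S:ℝ)/q)))
          + ((l:ℝ)/q) * Real.exp T) := by
    have h1 : ((l:ℝ) + (S:ℝ) + c*q)/q = (l:ℝ)/q + ((S:ℝ)/q + c) := by
      field_simp; ring
    rw [h1]; ring
  rw [hsplit]
  have hsS : (S:ℝ)/q ≤ Smax := by
    rw [div_le_iff₀ hq]; linarith
  have hs0 : (0:ℝ) ≤ (S:ℝ)/q := by positivity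
  have hexpT1 : Real.exp T ≤ 1 := Real.exp_le_one_iff.2 hT0
  have hcp : (0:ℝ) < c^(r-1) := pow_pos hc _
  rw [abs_mul, abs_of_pos hcp]
  have hW : |((S:ℝ)/q + c) * (Real.exp T - Real.exp (-((S:ℝ)/q)^2/2 - c*((S:ℝ)/q)))
      + ((l:ℝ)/q) * Real.exp T| ≤ (Smax + c)*(K/q) + (l:ℝ)/q := by
    calc |((S:ℝ)/q + c) * (Real.exp T - Real.exp (-((S:ℝ)/q)^2/2 - c*((S:ℝ)/q)))
        + ((l:ℝ)/q) * Real.exp T|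
        ≤ |((S:ℝ)/q + c) * (Real.exp T - Real.exp (-((S:ℝ)/q)^2/2 - c*((S:ℝ)/q)))|
          + |((l:ℝ)/q) * Real.exp T| := abs_add_le _ _
    _ = ((S:ℝ)/q + c) * |Real.exp T - Real.exp (-((S:ℝ)/q)^2/2 - c*((S:ℝ)/q))|
          + ((l:ℝ)/q) * Real.exp T := by
          rw [abs_mul, abs_mul, abs_of_nonneg (by positivity : (0:ℝ) ≤ (S:ℝ)/q + c),
            abs_of_nonneg (by positivity : (0:ℝ) ≤ (l:ℝ)/q),
            abs_of_pos (Real.exp_pos _)]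
    _ ≤ (Smax + c)*(K/q) + ((l:ℝ)/q) * 1 := by
          apply add_le_add
          · apply mul_le_mul (by linarith) hPE (abs_nonneg _) (by linarith)
          · exact mul_le_mul_of_nonneg_left hexpT1 (by positivity)
    _ = (Smax + c)*(K/q) + (l:ℝ)/q := by ring
  calc c^(r-1) * |((S:ℝ)/q + c) * (Real.exp T - Real.exp (-((S:ℝ)/q)^2/2 - c*((S:ℝ)/q)))
      + ((l:ℝ)/q) * Real.exp T|
      ≤ c^(r-1) * ((Smax + c)*(K/q) + (l:ℝ)/q) :=
        mul_le_mul_of_nonneg_left hW hcp.le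
  _ = c^(r-1) * ((Smax + c)*K + l)/q := by field_simp
  _ ≤ (c^(r-1) * ((Smax + c)*K + l) + 1)/q := by
      gcongr
      linarith
end

section
/- For integers 1 ≤ r ≤ l define C_{l,r} := Σ_{π} ∏_{B ∈ π} c_{|B|}, the sum ranging over all set partitions π of {1, …, l} into exactly r non-empty blocks, where c_m := ∏_{i=1}^{m-1}(2i - 1) (with c_1 = 1). Then for every l ≥ 2 and 1 ≤ r ≤ l, C_{l,r} = (2l - r - 2)·C_{l-1,r} + C_{l-1,r-1}, with the conventions C_{1,1} = 1 and C_{l,r} = 0 whenever r < 1 or r > l. -/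
/-!
Remove one label `a` from a partition of `insert a s` into `r + 1` blocks. If `{a}` is a block,
what is left is a partition of `s` into `r` blocks with the same weight, because `c₁ = 1`.
Otherwise `a` sits in a block `insert a B` with `B` a block of a partition `Q` of `s` into
`r + 1` blocks, and `c_{m+1} = (2m - 1) c_m` multiplies the weight of `Q` by `2|B| - 1`;
summed over the blocks of `Q` this factor gives `2|s| - (r + 1)`. Both correspondences are
bijections, and transporting partitions along `Fin.castSucc` puts `C (l - 1) r` inside
`Fin l`.
-/

open Finset

/-- `cShape m = ∏_{i=1}^{m-1} (2i-1)`: the number of binary tree shapes with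
`m` labelled leaves (as a real number), with `cShape 1 = 1`. -/
def cShape (m : ℕ) : ℝ := ∏ i ∈ Finset.range (m - 1), (2 * (i : ℝ) + 1)

/-- `C l r = Σ_π ∏_{B ∈ π} c_{|B|}`, summing over set partitions of `{1,…,l}`
into exactly `r` non-empty blocks. -/
noncomputable def C (l r : ℕ) : ℝ :=
  ∑ P ∈ (Finset.univ : Finset (Finpartition (Finset.univ : Finset (Fin l)))).filter
      (fun P => P.parts.card = r),
    ∏ B ∈ P.parts, cShape B.card

lemma cShape_one : cShape 1 = 1 := by simp [cShape]

lemma cShape_succ {m : ℕ} (hm : m ≠ 0) : cShape (m + 1) = (2 * m - 1) * cShape m := by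
  obtain ⟨k, rfl⟩ := Nat.exists_eq_succ_of_ne_zero hm
  rw [cShape, cShape, Nat.add_sub_cancel, Nat.succ_sub_one, prod_range_succ, mul_comm]
  push_cast
  ring

lemma Finset.map_preimage_of_subset {α β : Type*} {s : Finset α} {t : Finset β} (e : α ↪ β)
    (ht : t ⊆ s.map e) : (t.preimage e e.injective.injOn).map e = t := by
  ext b
  refine ⟨fun hb => ?_, fun hb => ?_⟩
  · obtain ⟨x, hx, rfl⟩ := mem_map.1 hb
    exact mem_preimage.1 hx
  · obtain ⟨x, -, rfl⟩ := mem_map.1 (ht hb)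
    exact mem_map_of_mem e (mem_preimage.2 hb)

namespace Finpartition

section Image

variable {α β : Type*} [Lattice α] [OrderBot α] [DistribLattice β] [OrderBot β] [DecidableEq β]
  {a : α}

def image (P : Finpartition a) (f : α → β) (hsup : ∀ x y, f (x ⊔ y) = f x ⊔ f y)
    (hinf : ∀ x y, f (x ⊓ y) = f x ⊓ f y) (hbot : f ⊥ = ⊥) (hP : ∀ x ∈ P.parts, f x ≠ ⊥) :
    Finpartition (f a) where
  parts := P.parts.image f
  supIndep := SupIndep.image <|
    Finset.supIndep_iff_pairwiseDisjoint.2 <| P.pairwiseDisjoint_apply hinf hbot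
  sup_parts := by rw [sup_image, Function.id_comp, P.sup_parts_apply hsup hbot]
  bot_notMem := by simpa using hP

@[simp]
lemma parts_image (P : Finpartition a) (f : α → β) (hsup hinf hbot hP) :
    (P.image f hsup hinf hbot hP).parts = P.parts.image f := rfl

end Image

section Embedding

variable {α β : Type*} [DecidableEq α] [DecidableEq β] {s : Finset α}

def finsetMap (e : α ↪ β) (P : Finpartition s) : Finpartition (s.map e) :=
  P.image (Finset.map e) (fun _ _ => map_union _ _) (fun _ _ => map_inter _ _) (map_empty e)
    fun _ ht => (P.nonempty_of_mem_parts ht).map.ne_empty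

noncomputable def finsetComap (e : α ↪ β) (Q : Finpartition (s.map e)) : Finpartition s :=
  (Q.image (fun t => t.preimage e e.injective.injOn) (fun _ _ => preimage_union _)
    (fun _ _ => preimage_inter _ _) preimage_empty fun t ht => by
      obtain ⟨_, hb⟩ := Q.nonempty_of_mem_parts ht
      obtain ⟨x, -, rfl⟩ := mem_map.1 (Q.le ht hb)
      exact ne_empty_of_mem (mem_preimage.2 hb)).copy (preimage_map e s)

noncomputable def finsetMapEquiv (e : α ↪ β) : Finpartition s ≃ Finpartition (s.map e) where
  toFun := finsetMap e
  invFun := finsetComap e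
  left_inv P := by
    ext1
    simp [finsetMap, finsetComap, image_image, Function.comp_def, preimage_map]
  right_inv Q := by
    ext1
    simp only [finsetMap, finsetComap, parts_image, copy_parts, image_image, Function.comp_def]
    exact (image_congr fun t ht => map_preimage_of_subset e (Q.le ht)).trans image_id'

lemma card_parts_finsetMapEquiv (e : α ↪ β) (P : Finpartition s) :
    #(finsetMapEquiv e P).parts = #P.parts :=
  card_image_of_injective _ (map_injective e)

end Embedding

section EraseInsert

variable {α : Type*} [DecidableEq α] {s B : Finset α} {a : α}

lemma sup_parts_erase (P : Finpartition s) (hB : B ∈ P.parts) :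
    (P.parts.erase B).sup id = s \ B := by
  ext x
  simp only [mem_sup, mem_erase, id_eq, mem_sdiff]
  constructor
  · rintro ⟨t, ⟨htB, ht⟩, hxt⟩
    exact ⟨P.le ht hxt, fun hxB => htB (P.eq_of_mem_parts ht hB hxt hxB)⟩
  · rintro ⟨hxs, hxB⟩
    obtain ⟨t, ht, hxt⟩ := P.exists_mem hxs
    exact ⟨t, ⟨fun htB => hxB (htB ▸ hxt), ht⟩, hxt⟩

def erasePart (P : Finpartition s) (hB : B ∈ P.parts) : Finpartition (s \ B) :=
  P.ofSubset (erase_subset B P.parts) (P.sup_parts_erase hB)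

lemma card_parts_erasePart (P : Finpartition s) (hB : B ∈ P.parts) :
    #(P.erasePart hB).parts + 1 = #P.parts :=
  card_erase_add_one hB

def insertSingleton (Q : Finpartition s) (ha : a ∉ s) : Finpartition (insert a s) :=
  Q.extend (singleton_ne_empty a) (disjoint_singleton_right.2 ha)
    (by rw [sup_eq_union, union_comm, ← insert_eq])

lemma card_parts_insertSingleton (Q : Finpartition s) (ha : a ∉ s) :
    #(Q.insertSingleton ha).parts = #Q.parts + 1 :=
  card_extend _ _ _

def eraseSingletonPart (P : Finpartition (insert a s)) (ha : a ∉ s) (h : {a} ∈ P.parts) :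
    Finpartition s :=
  (P.erasePart h).copy (by rw [sdiff_singleton_eq_erase, erase_insert ha])

lemma card_parts_eraseSingletonPart (P : Finpartition (insert a s)) (ha : a ∉ s)
    (h : {a} ∈ P.parts) : #(P.eraseSingletonPart ha h).parts + 1 = #P.parts :=
  P.card_parts_erasePart h

lemma insert_notMem_parts (Q : Finpartition s) (ha : a ∉ s) : insert a B ∉ Q.parts :=
  fun h => ha (Q.le h (mem_insert_self a B))

def insertIntoPart (Q : Finpartition s) (ha : a ∉ s) (hB : B ∈ Q.parts) :
    Finpartition (insert a s) :=
  (Q.erasePart hB).extend (insert_ne_empty a B)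
    (disjoint_insert_right.2 ⟨fun h => ha (mem_sdiff.1 h).1, sdiff_disjoint⟩)
    (by rw [sup_eq_union, union_insert, sdiff_union_of_subset (Q.le hB)])

lemma parts_insertIntoPart (Q : Finpartition s) (ha : a ∉ s) (hB : B ∈ Q.parts) :
    (Q.insertIntoPart ha hB).parts = insert (insert a B) (Q.parts.erase B) := rfl

lemma card_parts_insertIntoPart (Q : Finpartition s) (ha : a ∉ s) (hB : B ∈ Q.parts) :
    #(Q.insertIntoPart ha hB).parts = #Q.parts :=
  (card_extend _ _ _).trans (Q.card_parts_erasePart hB)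

lemma part_insertIntoPart (Q : Finpartition s) (ha : a ∉ s) (hB : B ∈ Q.parts) :
    (Q.insertIntoPart ha hB).part a = insert a B :=
  part_eq_of_mem _ (mem_insert_self _ _) (mem_insert_self a B)

lemma singleton_notMem_parts_insertIntoPart (Q : Finpartition s) (ha : a ∉ s)
    (hB : B ∈ Q.parts) : {a} ∉ (Q.insertIntoPart ha hB).parts := by
  intro h
  obtain ⟨b, hb⟩ := Q.nonempty_of_mem_parts hB
  have hab : insert a B = {a} :=
    (Q.part_insertIntoPart ha hB).symm.trans (part_eq_of_mem _ h (mem_singleton_self a))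
  have hba : b = a := mem_singleton.1 (hab ▸ mem_insert_of_mem hb)
  exact ha (hba ▸ Q.le hB hb)

lemma part_mem_insert (P : Finpartition (insert a s)) : P.part a ∈ P.parts :=
  P.part_mem.2 (mem_insert_self a s)

lemma mem_part_insert (P : Finpartition (insert a s)) : a ∈ P.part a :=
  P.mem_part_self.2 (mem_insert_self a s)

lemma erase_part_nonempty (P : Finpartition (insert a s)) (h : P.part a ≠ {a}) :
    ((P.part a).erase a).Nonempty := by
  simpa [nonempty_iff_ne_empty, erase_eq_empty_iff] using h

lemma erase_part_notMem_parts (P : Finpartition (insert a s)) (h : P.part a ≠ {a}) :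
    (P.part a).erase a ∉ P.parts := by
  intro hmem
  obtain ⟨x, hx⟩ := P.erase_part_nonempty h
  have hpart := P.eq_of_mem_parts hmem P.part_mem_insert hx (mem_of_mem_erase hx)
  exact (hpart ▸ notMem_erase a (P.part a)) P.mem_part_insert

def eraseFromPart (P : Finpartition (insert a s)) (ha : a ∉ s) (h : P.part a ≠ {a}) :
    Finpartition s :=
  (P.erasePart P.part_mem_insert).extend (P.erase_part_nonempty h).ne_empty
    (disjoint_of_subset_right (erase_subset a _) sdiff_disjoint)
    (by
      rw [sup_eq_union, ← erase_eq_of_notMem (notMem_sdiff_of_mem_right P.mem_part_insert),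
        ← erase_union_distrib, sdiff_union_of_subset (P.part_subset a), erase_insert ha])

lemma parts_eraseFromPart (P : Finpartition (insert a s)) (ha : a ∉ s) (h : P.part a ≠ {a}) :
    (P.eraseFromPart ha h).parts = insert ((P.part a).erase a) (P.parts.erase (P.part a)) := rfl

lemma card_parts_eraseFromPart (P : Finpartition (insert a s)) (ha : a ∉ s)
    (h : P.part a ≠ {a}) : #(P.eraseFromPart ha h).parts = #P.parts :=
  (card_extend _ _ _).trans (P.card_parts_erasePart _)

lemma erase_part_mem_eraseFromPart (P : Finpartition (insert a s)) (ha : a ∉ s)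
    (h : P.part a ≠ {a}) : (P.part a).erase a ∈ (P.eraseFromPart ha h).parts :=
  mem_insert_self _ _

lemma insertIntoPart_eraseFromPart (P : Finpartition (insert a s)) (ha : a ∉ s)
    (h : P.part a ≠ {a}) :
    (P.eraseFromPart ha h).insertIntoPart ha (P.erase_part_mem_eraseFromPart ha h) = P := by
  ext1
  rw [parts_insertIntoPart, insert_erase P.mem_part_insert, parts_eraseFromPart,
    erase_insert fun hmem => P.erase_part_notMem_parts h (mem_of_mem_erase hmem),
    insert_erase P.part_mem_insert]

lemma eraseFromPart_insertIntoPart (Q : Finpartition s) (ha : a ∉ s) (hB : B ∈ Q.parts)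
    (h : (Q.insertIntoPart ha hB).part a ≠ {a}) :
    (Q.insertIntoPart ha hB).eraseFromPart ha h = Q := by
  have haB : a ∉ B := fun h => ha (Q.le hB h)
  ext1
  rw [parts_eraseFromPart, part_insertIntoPart, erase_insert haB, parts_insertIntoPart,
    erase_insert fun hmem => Q.insert_notMem_parts ha (mem_of_mem_erase hmem), insert_erase hB]

end EraseInsert

section TreeCount

variable {α β : Type*} [DecidableEq α] [DecidableEq β] {s B : Finset α} {a : α}

def treeCount (P : Finpartition s) : ℝ := ∏ B ∈ P.parts, cShape #B

lemma treeCount_finsetMapEquiv (e : α ↪ β) (P : Finpartition s) :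
    (finsetMapEquiv e P).treeCount = P.treeCount := by
  rw [treeCount, treeCount]
  exact (prod_image fun _ _ _ _ h => map_injective e h).trans (by simp)

lemma treeCount_eraseSingletonPart (P : Finpartition (insert a s)) (ha : a ∉ s)
    (h : {a} ∈ P.parts) : (P.eraseSingletonPart ha h).treeCount = P.treeCount := by
  rw [treeCount, treeCount, ← mul_prod_erase _ _ h, card_singleton, cShape_one, one_mul]
  rfl

lemma treeCount_insertIntoPart (Q : Finpartition s) (ha : a ∉ s) (hB : B ∈ Q.parts) :
    (Q.insertIntoPart ha hB).treeCount = (2 * #B - 1) * Q.treeCount := by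
  have haB : a ∉ B := fun h => ha (Q.le hB h)
  rw [treeCount, treeCount, parts_insertIntoPart,
    prod_insert fun hmem => Q.insert_notMem_parts ha (mem_of_mem_erase hmem),
    card_insert_of_notMem haB, cShape_succ (Q.nonempty_of_mem_parts hB).card_ne_zero,
    ← mul_prod_erase _ _ hB, mul_assoc]

lemma sum_two_mul_card_sub_one (Q : Finpartition s) :
    ∑ B ∈ Q.parts, (2 * (#B : ℝ) - 1) = 2 * #s - #Q.parts := by
  rw [sum_sub_distrib, ← mul_sum, ← Nat.cast_sum, Q.sum_card_parts, sum_const, nsmul_one]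

end TreeCount

end Finpartition

open Finpartition

section BouquetCount

variable {α β : Type*} [DecidableEq α] [DecidableEq β] {s : Finset α} {a : α}

noncomputable def bouquetCount (s : Finset α) (r : ℕ) : ℝ :=
  ∑ P ∈ (univ : Finset (Finpartition s)).filter (fun P => #P.parts = r), P.treeCount

lemma C_eq_bouquetCount (l r : ℕ) : C l r = bouquetCount (univ : Finset (Fin l)) r := rfl

lemma bouquetCount_map (e : α ↪ β) (s : Finset α) (r : ℕ) :
    bouquetCount (s.map e) r = bouquetCount s r :=
  (sum_equiv (finsetMapEquiv e) (by simp [card_parts_finsetMapEquiv])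
    fun P _ => (treeCount_finsetMapEquiv e P).symm).symm

lemma sum_treeCount_of_singleton_mem (ha : a ∉ s) (r : ℕ) :
    ∑ P ∈ univ.filter (fun P : Finpartition (insert a s) => #P.parts = r + 1 ∧ {a} ∈ P.parts),
      P.treeCount = bouquetCount s r := by
  refine sum_bij' (fun P hP => P.eraseSingletonPart ha (mem_filter.1 hP).2.2)
    (fun Q _ => Q.insertSingleton ha) ?_ ?_ ?_ ?_ ?_
  · intro P hP
    obtain ⟨hcard, h⟩ := (mem_filter.1 hP).2
    have := P.card_parts_eraseSingletonPart ha h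
    simp only [mem_filter, mem_univ, true_and]
    omega
  · intro Q hQ
    simp only [mem_filter, mem_univ, true_and] at hQ ⊢
    exact ⟨by rw [card_parts_insertSingleton, hQ], mem_insert_self _ _⟩
  · intro P hP
    ext1
    exact insert_erase (mem_filter.1 hP).2.2
  · intro Q _
    ext1
    exact erase_insert fun h => ha (Q.le h (mem_singleton_self a))
  · intro P _
    exact (P.treeCount_eraseSingletonPart ha _).symm

lemma sum_treeCount_of_singleton_notMem (ha : a ∉ s) (r : ℕ) :
    ∑ P ∈ univ.filter (fun P : Finpartition (insert a s) => #P.parts = r ∧ {a} ∉ P.parts),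
      P.treeCount =
    ∑ Q ∈ univ.filter (fun Q : Finpartition s => #Q.parts = r),
      ∑ B ∈ Q.parts, (2 * #B - 1) * Q.treeCount := by
  have hne {P : Finpartition (insert a s)} (h : {a} ∉ P.parts) : P.part a ≠ {a} :=
    fun he => h (he ▸ P.part_mem_insert)
  rw [sum_sigma']
  symm
  refine sum_bij' (fun x hx => x.1.insertIntoPart ha (mem_sigma.1 hx).2)
    (fun P hP => ⟨P.eraseFromPart ha (hne (mem_filter.1 hP).2.2), (P.part a).erase a⟩)
    ?_ ?_ ?_ ?_ ?_
  · rintro ⟨Q, B⟩ hx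
    obtain ⟨hQ, hB⟩ := mem_sigma.1 hx
    simp only [mem_filter, mem_univ, true_and] at hQ ⊢
    exact ⟨(Q.card_parts_insertIntoPart ha hB).trans hQ,
      Q.singleton_notMem_parts_insertIntoPart ha hB⟩
  · intro P hP
    have hcard := (mem_filter.1 hP).2.1
    simp only [mem_sigma, mem_filter, mem_univ, true_and]
    exact ⟨(P.card_parts_eraseFromPart ha _).trans hcard, P.erase_part_mem_eraseFromPart ha _⟩
  · rintro ⟨Q, B⟩ hx
    have hB := (mem_sigma.1 hx).2
    refine Sigma.ext (Q.eraseFromPart_insertIntoPart ha hB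
      (hne (Q.singleton_notMem_parts_insertIntoPart ha hB))) (heq_of_eq ?_)
    rw [part_insertIntoPart, erase_insert fun h => ha (Q.le hB h)]
  · intro P hP
    exact P.insertIntoPart_eraseFromPart ha (hne (mem_filter.1 hP).2.2)
  · rintro ⟨Q, B⟩ _
    exact (Q.treeCount_insertIntoPart ha _).symm

theorem bouquetCount_insert (ha : a ∉ s) (r : ℕ) :
    bouquetCount (insert a s) (r + 1) =
      (2 * #s - (r + 1)) * bouquetCount s (r + 1) + bouquetCount s r := by
  rw [bouquetCount, ← sum_filter_add_sum_filter_not _ (fun P => {a} ∈ P.parts), filter_filter,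
    filter_filter, sum_treeCount_of_singleton_mem ha, sum_treeCount_of_singleton_notMem ha,
    add_comm]
  congr 1
  rw [bouquetCount, mul_sum]
  refine sum_congr rfl fun Q hQ => ?_
  rw [← sum_mul, Q.sum_two_mul_card_sub_one, (mem_filter.1 hQ).2, Nat.cast_succ]

end BouquetCount

theorem stmt13 (l r : ℕ) (hl : 2 ≤ l) (hr1 : 1 ≤ r) (hrl : r ≤ l) :
    C l r = (2 * l - r - 2 : ℕ) * C (l - 1) r + C (l - 1) (r - 1) := by
  obtain ⟨n, rfl⟩ : ∃ n, l = n + 2 := ⟨l - 2, by omega⟩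
  obtain ⟨k, rfl⟩ : ∃ k, r = k + 1 := ⟨r - 1, by omega⟩
  have hcoeff : ((2 * (n + 2) - (k + 1) - 2 : ℕ) : ℝ) = 2 * (n + 1 : ℕ) - (k + 1) := by
    rw [show 2 * (n + 2) - (k + 1) - 2 = 2 * (n + 1) - (k + 1) by omega,
      Nat.cast_sub (by omega)]
    push_cast
    ring
  rw [C_eq_bouquetCount, C_eq_bouquetCount, C_eq_bouquetCount, Fin.univ_castSuccEmb (n + 1),
    cons_eq_insert, bouquetCount_insert (by simp), bouquetCount_map, bouquetCount_map, card_map,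
    card_univ, Fintype.card_fin, Nat.add_sub_cancel, hcoeff]
end
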